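/- arXiv:1910.02194 — 2 statements merged into one kernel-verified Lean document; each statement's English description precedes it below -/
import Mathlib

section
/- Let C(n, M, k) denote the number of integer vectors (x_1,...,x_n) with 0 ≤ x_i ≤ c_i and Σ x_i = k, where M = (Σ c_i)/2. Then for every k, C(n, M+k) = C(n, M−k) (the count is symmetric about M), and C is maximized at ⌊M⌋ (and ⌈M⌉). -/
/-!
The reflection `x ↦ c - x` matches the tuples of sum `s` with those of sum `Σ cᵢ - s`.
For unimodality we prove the stronger `C u ≤ C v` whenever `u ≤ v` and `u + v ≤ Σ cᵢ`, by
induction on the number of coordinates: splitting off a coordinate of capacity `a` turns the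
count into a sum of `a + 1` consecutive old counts, and sliding this window from `s` to `s + 1`
trades the old count at `s - a` for the one at `s + 1`, which is no smaller by induction.
-/

open Finset

section Compositions

variable {ι : Type*} [Fintype ι] [DecidableEq ι]

def boundedCompositions (c : ι → ℕ) (s : ℕ) : Finset (ι → ℕ) :=
  (Fintype.piFinset fun i => range (c i + 1)).filter fun x => ∑ i, x i = s

theorem mem_boundedCompositions {c x : ι → ℕ} {s : ℕ} :
    x ∈ boundedCompositions c s ↔ x ≤ c ∧ ∑ i, x i = s := by
  simp [boundedCompositions, Pi.le_def]

theorem le_sum_of_mem_boundedCompositions {c x : ι → ℕ} {s : ℕ}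
    (hx : x ∈ boundedCompositions c s) : s ≤ ∑ i, c i := by
  obtain ⟨hxc, rfl⟩ := mem_boundedCompositions.1 hx
  exact sum_le_sum fun i _ => hxc i

theorem boundedCompositions_eq_empty {c : ι → ℕ} {s : ℕ} (hs : ∑ i, c i < s) :
    boundedCompositions c s = ∅ :=
  eq_empty_of_forall_notMem fun _ hx => (le_sum_of_mem_boundedCompositions hx).not_gt hs

theorem tsub_mem_boundedCompositions {c x : ι → ℕ} {s : ℕ}
    (hx : x ∈ boundedCompositions c s) : c - x ∈ boundedCompositions c (∑ i, c i - s) := by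
  obtain ⟨hxc, rfl⟩ := mem_boundedCompositions.1 hx
  exact mem_boundedCompositions.2 ⟨tsub_le_self, sum_tsub_distrib _ fun i _ => hxc i⟩

theorem card_boundedCompositions_tsub (c : ι → ℕ) {s : ℕ} (hs : s ≤ ∑ i, c i) :
    #(boundedCompositions c (∑ i, c i - s)) = #(boundedCompositions c s) := by
  refine card_nbij' (c - ·) (c - ·) (fun y hy => ?_) (fun x hx => tsub_mem_boundedCompositions hx)
    (fun y hy => ?_) (fun x hx => ?_)
  · simpa [Nat.sub_sub_self hs] using tsub_mem_boundedCompositions hy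
  · exact tsub_tsub_cancel_of_le (mem_boundedCompositions.1 hy).1
  · exact tsub_tsub_cancel_of_le (mem_boundedCompositions.1 hx).1

end Compositions

theorem cons_mem_boundedCompositions_cons {n : ℕ} {a b s : ℕ} {c x : Fin n → ℕ} :
    (Fin.cons b x : Fin (n + 1) → ℕ) ∈ boundedCompositions (Fin.cons a c) s ↔
      b ≤ a ∧ x ≤ c ∧ b + ∑ i, x i = s := by
  simp only [mem_boundedCompositions, Fin.cons_le_cons, Fin.sum_cons, and_assoc]

theorem card_boundedCompositions_cons {n : ℕ} (a : ℕ) (c : Fin n → ℕ) (s : ℕ) :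
    #(boundedCompositions (Fin.cons a c : Fin (n + 1) → ℕ) s) =
      ∑ t ∈ Icc (s - a) s, #(boundedCompositions c t) := by
  rw [← card_sigma]
  refine card_nbij' (fun x => ⟨∑ i, Fin.tail x i, Fin.tail x⟩) (fun p => Fin.cons (s - p.1) p.2)
    (fun x hx => ?_) (fun p hp => ?_) (fun x hx => ?_) (fun p hp => ?_)
  · induction x using Fin.consCases with | cons b x
    obtain ⟨hb, hxc, rfl⟩ := cons_mem_boundedCompositions_cons.1 hx
    simp only [mem_coe, mem_sigma, mem_Icc, mem_boundedCompositions, Fin.tail_cons]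
    exact ⟨⟨by omega, by omega⟩, hxc, trivial⟩
  · obtain ⟨t, y⟩ := p
    simp only [mem_coe, mem_sigma, mem_Icc, mem_boundedCompositions] at hp
    obtain ⟨⟨hst, hts⟩, hy, rfl⟩ := hp
    simp only [mem_coe, cons_mem_boundedCompositions_cons]
    exact ⟨by omega, hy, by omega⟩
  · induction x using Fin.consCases with | cons b x
    obtain ⟨-, -, rfl⟩ := cons_mem_boundedCompositions_cons.1 hx
    simp
  · obtain ⟨t, y⟩ := p
    simp only [mem_coe, mem_sigma, mem_boundedCompositions] at hp
    simp [hp.2.2]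

section SymmetricSequences

variable {β : Type*}

theorem le_of_le_of_add_le_of_symm [Preorder β] {f : ℕ → β} {N : ℕ}
    (symm : ∀ s ≤ N, f (N - s) = f s) (step : ∀ s, 2 * s + 1 ≤ N → f s ≤ f (s + 1))
    {u v : ℕ} (huv : u ≤ v) (hN : u + v ≤ N) : f u ≤ f v := by
  have mono : MonotoneOn f (Set.Iic (N / 2)) :=
    monotoneOn_of_le_add_one Set.ordConnected_Iic fun s _ _ hs => step s (by rw [Set.mem_Iic] at hs; omega)
  rcases le_or_gt v (N / 2) with hv | hv
  · exact mono (Set.mem_Iic.2 (by omega)) hv huv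
  · rw [← symm v (by omega)]
    exact mono (Set.mem_Iic.2 (by omega)) (Set.mem_Iic.2 (by omega)) (by omega)

theorem sum_Icc_tsub_le_sum_Icc_tsub_add_one [AddCommMonoid β] [PartialOrder β]
    [CanonicallyOrderedAdd β] [IsOrderedAddMonoid β] {f : ℕ → β} {N : ℕ}
    (hf : ∀ u v, u ≤ v → u + v ≤ N → f u ≤ f v) (a : ℕ) {s : ℕ} (hs : 2 * s + 1 ≤ N + a) :
    ∑ t ∈ Icc (s - a) s, f t ≤ ∑ t ∈ Icc (s + 1 - a) (s + 1), f t := by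
  rcases le_or_gt a s with has | has
  · rw [show s + 1 - a = s - a + 1 by omega, Icc_add_one_left_eq_Ioc, sum_Ioc_succ_top (by omega),
      Icc_eq_cons_Ioc (by omega), sum_cons, add_comm]
    gcongr
    exact hf _ _ (by omega) (by omega)
  · rw [show s + 1 - a = s - a by omega, sum_Icc_succ_top (by omega)]
    exact le_self_add

end SymmetricSequences

theorem card_boundedCompositions_le_of_le_of_add_le {n : ℕ} (c : Fin n → ℕ) {u v : ℕ}
    (huv : u ≤ v) (hN : u + v ≤ ∑ i, c i) :
    #(boundedCompositions c u) ≤ #(boundedCompositions c v) := by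
  induction c using Fin.consInduction generalizing u v with
  | elim0 => simp_all
  | cons a c ih =>
    refine le_of_le_of_add_le_of_symm (f := fun s => #(boundedCompositions _ s))
      (fun s => card_boundedCompositions_tsub _) (fun s hs => ?_) huv hN
    simp only [card_boundedCompositions_cons]
    refine sum_Icc_tsub_le_sum_Icc_tsub_add_one (fun u v => ih) a ?_
    simpa [Fin.sum_cons, add_comm] using hs

theorem bounded_compositions_symmetric_and_unimodal_general {n : ℕ} (c : Fin n → ℕ)
    (C : ℕ → ℕ)
    (hC : ∀ s, C s = ((Fintype.piFinset fun i => Finset.range (c i + 1)).filter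
      (fun x => ∑ i, x i = s)).card) :
    (∀ s ≤ ∑ i, c i, C s = C ((∑ i, c i) - s)) ∧
    (∀ s, C s ≤ C ((∑ i, c i) / 2)) := by
  have hC : ∀ s, C s = #(boundedCompositions c s) := hC
  simp only [hC]
  refine ⟨fun s hs => (card_boundedCompositions_tsub c hs).symm, fun s => ?_⟩
  rcases le_or_gt s (∑ i, c i) with hs | hs
  · rcases le_or_gt s ((∑ i, c i) / 2) with hs' | hs'
    · exact card_boundedCompositions_le_of_le_of_add_le c hs' (by omega)
    · rw [← card_boundedCompositions_tsub c hs]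
      exact card_boundedCompositions_le_of_le_of_add_le c (by omega) (by omega)
  · simp [boundedCompositions_eq_empty hs]

/-- For positive capacities `c_1, …, c_n`, let `C s` be the number of integer
tuples `(x_1, …, x_n)` with `0 ≤ x_i ≤ c_i` and `Σ x_i = s`.  Then `C` is
symmetric about `M = (Σ c_i)/2`, i.e. `C s = C (Σ c_i − s)` for all `s ≤ Σ c_i`,
and `C` is maximized at `⌊M⌋ = (Σ c_i)/2` (natural-number division). -/
theorem bounded_compositions_symmetric_and_unimodal {n : ℕ} (c : Fin n → ℕ)
    (hc : ∀ i, 0 < c i)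
    (C : ℕ → ℕ)
    (hC : ∀ s, C s = ((Fintype.piFinset fun i => Finset.range (c i + 1)).filter
      (fun x => ∑ i, x i = s)).card) :
    (∀ s ≤ ∑ i, c i, C s = C ((∑ i, c i) - s)) ∧
    (∀ s, C s ≤ C ((∑ i, c i) / 2)) :=
  bounded_compositions_symmetric_and_unimodal_general c C hC
end

section
/- Adding an edge of capacity n between v_3 and v_4 in the constrained 4-leaf star (each leaf edge capacity 1, center score fixed at 2) yields a network in which the liquidity between v_1 and v_2 equals (n+2)/(4n+6), which is strictly less than 1/3 for all n ≥ 1 and strictly decreasing in n. -/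
/-!
A class is determined by its leaf scores `(s₀, s₁, s₂, s₃)`, and since the scores sum to `n + 2`
it is already determined by `(s₀, s₁, s₂)`. These triples fill the box
`{0,1} × {0,1} × {0,…,n+1}` except for `(0,0,0)` and `(1,1,n+1)`, which would force `s₃` out of
`{0,…,n+1}`; hence there are `4(n+2) - 2 = 4n + 6` classes. A payment from `v₁` to `v₂` is
possible exactly when `s₀ = 1` and `s₁ = 0`, leaving `s₂` free in `{0,…,n+1}`: `n + 2` classes.
Finally `(n+2)/(4n+6) = 1/4 + 1/(8n+12)`.
-/

open Finset

def leafScoreClasses (n : ℕ) : Finset (Fin 4 → ℕ) :=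
  (Fintype.piFinset fun i : Fin 4 => range (if (i : ℕ) < 2 then 2 else n + 2)).filter
    (fun s => ∑ i, s i = n + 2)

def firstThreeScores (s : Fin 4 → ℕ) : ℕ × ℕ × ℕ := (s 0, s 1, s 2)

lemma mem_leafScoreClasses {n : ℕ} {s : Fin 4 → ℕ} :
    s ∈ leafScoreClasses n ↔
      s 0 < 2 ∧ s 1 < 2 ∧ s 2 < n + 2 ∧ s 3 < n + 2 ∧ s 0 + s 1 + s 2 + s 3 = n + 2 := by
  simp [leafScoreClasses, Fintype.mem_piFinset, Fin.forall_fin_succ, Fin.sum_univ_four,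
    and_assoc]

lemma injOn_firstThreeScores (c : ℕ) :
    Set.InjOn firstThreeScores {s : Fin 4 → ℕ | ∑ i, s i = c} := by
  intro s hs t ht hst
  simp only [Set.mem_ofPred_eq, Fin.sum_univ_four] at hs ht
  simp only [firstThreeScores, Prod.mk.injEq] at hst
  obtain ⟨h0, h1, h2⟩ := hst
  funext i
  fin_cases i <;> simp <;> omega

lemma image_firstThreeScores_leafScoreClasses (n : ℕ) :
    (leafScoreClasses n).image firstThreeScores =
      (range 2 ×ˢ range 2 ×ˢ range (n + 2)) \ {(0, 0, 0), (1, 1, n + 1)} := by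
  ext ⟨a, b, c⟩
  simp only [mem_image, mem_leafScoreClasses, firstThreeScores, mem_sdiff, mem_product,
    mem_range, mem_insert, mem_singleton, Prod.mk.injEq]
  constructor
  · rintro ⟨s, hs, rfl, rfl, rfl⟩
    omega
  · intro h
    exact ⟨![a, b, c, n + 2 - a - b - c], by simp; omega, rfl, rfl, rfl⟩

lemma image_firstThreeScores_payable (n : ℕ) :
    ((leafScoreClasses n).filter fun s => s 0 = 1 ∧ s 1 = 0).image firstThreeScores =
      {1} ×ˢ {0} ×ˢ range (n + 2) := by
  ext ⟨a, b, c⟩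
  simp only [mem_image, mem_filter, mem_leafScoreClasses, firstThreeScores, mem_product,
    mem_range, mem_singleton, Prod.mk.injEq]
  constructor
  · rintro ⟨s, hs, rfl, rfl, rfl⟩
    omega
  · rintro ⟨rfl, rfl, hc⟩
    exact ⟨![1, 0, c, n + 1 - c], by simp; omega, rfl, rfl, rfl⟩

lemma card_leafScoreClasses (n : ℕ) : (leafScoreClasses n).card = 4 * n + 6 := by
  have hinj : Set.InjOn firstThreeScores (leafScoreClasses n : Set (Fin 4 → ℕ)) :=
    (injOn_firstThreeScores (n + 2)).mono fun s hs => (mem_filter.mp hs).2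
  have hsub : ({(0, 0, 0), (1, 1, n + 1)} : Finset (ℕ × ℕ × ℕ)) ⊆
      range 2 ×ˢ range 2 ×ˢ range (n + 2) := by
    intro p hp
    simp only [mem_insert, mem_singleton] at hp
    rcases hp with rfl | rfl <;> simp
  rw [← card_image_of_injOn hinj, image_firstThreeScores_leafScoreClasses,
    card_sdiff_of_subset hsub, card_pair (by simp), card_product, card_product, card_range,
    card_range]
  omega

lemma card_payable_leafScoreClasses (n : ℕ) :
    ((leafScoreClasses n).filter fun s => s 0 = 1 ∧ s 1 = 0).card = n + 2 := by
  have hinj : Set.InjOn firstThreeScores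
      (((leafScoreClasses n).filter fun s => s 0 = 1 ∧ s 1 = 0 : Finset _) : Set (Fin 4 → ℕ)) :=
    (injOn_firstThreeScores (n + 2)).mono fun s hs =>
      (mem_filter.mp (mem_filter.mp hs).1).2
  rw [← card_image_of_injOn hinj, image_firstThreeScores_payable]
  simp

lemma liquidity_lt_one_third {n : ℕ} (hn : 1 ≤ n) : ((n : ℚ) + 2) / (4 * n + 6) < 1 / 3 := by
  have h : (1 : ℚ) ≤ n := by exact_mod_cast hn
  rw [div_lt_div_iff₀ (by positivity) (by norm_num)]
  linarith

lemma strictAnti_liquidity : StrictAnti fun n : ℕ => ((n : ℚ) + 2) / (4 * n + 6) := by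
  refine strictAnti_nat_of_succ_lt fun n => ?_
  rw [div_lt_div_iff₀ (by positivity) (by positivity)]
  push_cast
  linarith

/-- Adding an edge of capacity `n` between `v_3` and `v_4` in the constrained
4-leaf star (leaf edges of capacity 1, center score fixed at 2).  Reachable
cycle-equivalence classes are indexed by the leaf score vectors
`s = (S_{v_1}, S_{v_2}, S_{v_3}, S_{v_4})` with `S_{v_1}, S_{v_2} ∈ {0,1}`,
`S_{v_3}, S_{v_4} ∈ {0, …, n+1}` and `Σ s = n + 2`.  There are `4n + 6` such
classes, of which exactly `n + 2` admit a payment from `v_1` to `v_2`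
(those with `s 0 = 1 ∧ s 1 = 0`), so the liquidity between `v_1` and `v_2`
equals `(n+2)/(4n+6)`, which is `< 1/3` for `n ≥ 1` and strictly decreasing. -/
theorem star_with_extra_edge_liquidity
    (classes : ℕ → Finset (Fin 4 → ℕ))
    (hclasses : ∀ n, classes n =
      (Fintype.piFinset fun i : Fin 4 =>
        Finset.range (if (i : ℕ) < 2 then 2 else n + 2)).filter
        (fun s => ∑ i, s i = n + 2))
    (liq : ℕ → ℚ)
    (hliq : ∀ n, liq n =
      ((((classes n).filter fun s => s 0 = 1 ∧ s 1 = 0).card : ℚ)) /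
        (((classes n).card : ℚ))) :
    (∀ n, (classes n).card = 4 * n + 6) ∧
    (∀ n, ((classes n).filter fun s => s 0 = 1 ∧ s 1 = 0).card = n + 2) ∧
    (∀ n, liq n = ((n : ℚ) + 2) / (4 * n + 6)) ∧
    (∀ n, 1 ≤ n → liq n < 1 / 3) ∧
    StrictAnti liq := by
  have hcard n : (classes n).card = 4 * n + 6 := hclasses n ▸ card_leafScoreClasses n
  have hpayable n : ((classes n).filter fun s => s 0 = 1 ∧ s 1 = 0).card = n + 2 :=
    hclasses n ▸ card_payable_leafScoreClasses n
  have hliq_eq : liq = fun n : ℕ => ((n : ℚ) + 2) / (4 * n + 6) := by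
    funext n
    rw [hliq, hcard, hpayable]
    push_cast
    rfl
  subst hliq_eq
  exact ⟨hcard, hpayable, fun _ => rfl, fun _ => liquidity_lt_one_third, strictAnti_liquidity⟩
end
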